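/- For every phylogenetic tree T ∈ 𝒯_n with n ≥ 4, the number of distinct TBR operations on T that induce a non-trivial split A|B of T equals (2|A|−3)(2|B|−3) − 1 for each such split; consequently, the number of TBR operations inducing non-trivial splits is Σ [(2|A|−3)(2|B|−3) − 1], the sum over all non-trivial splits A|B of T. -/

import Mathlib

/-!
Formalization framework for unrooted binary phylogenetic trees on the
leaf set `Fin n`, encoded via their split systems (Buneman's
splits-equivalence theorem: a binary phylogenetic tree is uniquely
determined by its set of splits, which is a maximal pairwise-compatible
collection of proper bipartitions of the leaf set containing all
trivial splits).  A split `A | Aᶜ` is recorded by storing both of its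
sides.
-/

/-- Two sides (subsets of leaves) are compatible: the corresponding
splits can coexist in a tree. -/
def SidesCompatible {n : ℕ} (A B : Finset (Fin n)) : Prop :=
  A ⊆ B ∨ B ⊆ A ∨ Disjoint A B ∨ A ∪ B = Finset.univ

/-- An unrooted binary phylogenetic tree on leaf set `Fin n`,
represented by the set of sides of its splits. -/
structure PhyloTree (n : ℕ) where
  sides : Finset (Finset (Fin n))
  proper : ∀ A ∈ sides, A.Nonempty ∧ A ≠ Finset.univ
  compl_mem : ∀ A ∈ sides, Aᶜ ∈ sides
  singleton_mem : ∀ x : Fin n, {x} ∈ sides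
  compatible : ∀ A ∈ sides, ∀ B ∈ sides, SidesCompatible A B
  maximal : ∀ A : Finset (Fin n), A.Nonempty → A ≠ Finset.univ →
    (∀ B ∈ sides, SidesCompatible A B) → A ∈ sides

namespace PhyloTree

variable {n : ℕ}

/-- The split system of the restricted tree `T|X`: two trees agree on
`X` (i.e. `T|X = T'|X`) iff their restricted split systems agree. -/
def restrict (T : PhyloTree n) (X : Finset (Fin n)) : Finset (Finset (Fin n)) :=
  T.sides.image (· ∩ X)

/-- `Γ(T)`: the sum of `|A| * |B|` over all non-trivial splits `A|B` of
`T` (each unordered split is stored twice in `sides`, hence the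
division by two, which is exact). -/
def gamma (T : PhyloTree n) : ℕ :=
  (∑ A ∈ T.sides.filter (fun A => 2 ≤ A.card ∧ 2 ≤ Aᶜ.card), A.card * Aᶜ.card) / 2

/-- A tree-rearrangement move: the deleted edge of `T` (recorded as the
unordered split it induces) together with the output tree. -/
abbrev Move (n : ℕ) := Sym2 (Finset (Fin n)) × PhyloTree n

/-- The set of TBR operations on `T`: delete the edge inducing the
split `A | Aᶜ` and reconnect, obtaining a distinct tree `θ.2`.  The
defining property is that deleting the corresponding edges from `T`
and from `θ.2` yields the same forest, i.e. `A|Aᶜ` is a split of both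
trees and the two restrictions agree. -/
def OTBR (T : PhyloTree n) : Set (Move n) :=
  { θ | θ.2 ≠ T ∧ ∃ A : Finset (Fin n),
      θ.1 = Sym2.mk A Aᶜ ∧ A ∈ T.sides ∧ A ∈ θ.2.sides ∧
      T.restrict A = θ.2.restrict A ∧ T.restrict Aᶜ = θ.2.restrict Aᶜ }

/-- SPR operations: TBR operations where one component `T|A` of the
bisection (the pruned subtree) is regrafted preserving its rooting,
i.e. `T|(A ∪ {x}) = θ(T)|(A ∪ {x})` for some (equivalently every) leaf
`x` of the other side. -/
def OSPR (T : PhyloTree n) : Set (Move n) :=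
  { θ | θ ∈ T.OTBR ∧ ∃ A : Finset (Fin n), θ.1 = Sym2.mk A Aᶜ ∧
      ∃ x ∈ Aᶜ, T.restrict (insert x A) = θ.2.restrict (insert x A) }

/-- The effect on sides of swapping the pendant subtrees `T|Y` and
`T|Z` (for disjoint clusters `Y`, `Z`). -/
def swapSide (Y Z A : Finset (Fin n)) : Finset (Fin n) :=
  if Y ⊆ A ∧ Disjoint Z A then (A \ Y) ∪ Z
  else if Z ⊆ A ∧ Disjoint Y A then (A \ Z) ∪ Y
  else A

/-- NNI operations: SPR operations in which the pruned subtree `T|Y` is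
swapped with a pendant subtree `T|Z` for some cluster `Z ≠ Y` of `T`. -/
def ONNI (T : PhyloTree n) : Set (Move n) :=
  { θ | θ ∈ T.OTBR ∧ ∃ Y Z : Finset (Fin n),
      θ.1 = Sym2.mk Y Yᶜ ∧
      (∃ x ∈ Yᶜ, T.restrict (insert x Y) = θ.2.restrict (insert x Y)) ∧
      Z ∈ T.sides ∧ Z ≠ Y ∧ Disjoint Y Z ∧
      θ.2.sides = T.sides.image (swapSide Y Z) }

/-- The TBR neighbourhood `N_TBR(T) = {θ(T) : θ ∈ O_TBR(T)}`. -/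
def NTBR (T : PhyloTree n) : Set (PhyloTree n) := Prod.snd '' T.OTBR

/-- The SPR neighbourhood. -/
def NSPR (T : PhyloTree n) : Set (PhyloTree n) := Prod.snd '' T.OSPR

/-- The NNI neighbourhood. -/
def NNNI (T : PhyloTree n) : Set (PhyloTree n) := Prod.snd '' T.ONNI

/-- A caterpillar: every internal vertex (equivalently, every
tripartition of the leaves into three clusters) is adjacent to a
leaf. -/
def IsCaterpillar (T : PhyloTree n) : Prop :=
  ∀ A B C : Finset (Fin n), A ∈ T.sides → B ∈ T.sides → C ∈ T.sides →
    Disjoint A B → Disjoint A C → Disjoint B C → A ∪ B ∪ C = Finset.univ →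
    (A.card = 1 ∨ B.card = 1 ∨ C.card = 1)

/-- A complete (maximally balanced) tree. -/
def IsComplete (T : PhyloTree n) : Prop :=
  ∃ k : ℕ, 3 * 2 ^ k ≤ n ∧ n < 3 * 2 ^ (k + 1) ∧
    (∃ Y ∈ T.sides, Y.card = 2 ^ (k + 1)) ∧
    ∀ Y ∈ T.sides, 2 ≤ Y.card → Y.card ≤ 2 ^ (k + 1) →
      ∃ Y₁ Y₂ : Finset (Fin n), Y₁ ∈ T.sides ∧ Y₂ ∈ T.sides ∧
        Disjoint Y₁ Y₂ ∧ Y₁ ∪ Y₂ = Y ∧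
        ∃ j : ℕ, Y₁.card = 2 ^ j ∧ 2 ^ (j - 1) ≤ Y₂.card ∧ Y₂.card < 2 ^ (j + 1)

/-- The pendant subtree on the cluster `S` is perfectly balanced:
every cluster inside `S` with at least two leaves splits into two
equal-sized child clusters. -/
def PerfOn (T : PhyloTree n) (S : Finset (Fin n)) : Prop :=
  ∀ Y ∈ T.sides, Y ⊆ S → 2 ≤ Y.card →
    ∃ Y₁ Y₂ : Finset (Fin n), Y₁ ∈ T.sides ∧ Y₂ ∈ T.sides ∧
      Disjoint Y₁ Y₂ ∧ Y₁ ∪ Y₂ = Y ∧ Y₁.card = Y₂.card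

/-- A perfect tree: either `n = 2^k` and `T` is two perfectly balanced
rooted trees with `2^(k-1)` leaves joined by an edge, or
`n = 3·2^(k-1)` and `T` is three perfectly balanced rooted trees with
`2^(k-1)` leaves attached to a common vertex. -/
def IsPerfect (T : PhyloTree n) : Prop :=
  (∃ k : ℕ, n = 2 ^ k ∧ ∃ A ∈ T.sides,
      A.card = 2 ^ (k - 1) ∧ T.PerfOn A ∧ T.PerfOn Aᶜ) ∨
  (∃ k : ℕ, n = 3 * 2 ^ (k - 1) ∧ ∃ A B C : Finset (Fin n),
      A ∈ T.sides ∧ B ∈ T.sides ∧ C ∈ T.sides ∧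
      Disjoint A B ∧ Disjoint A C ∧ Disjoint B C ∧
      A ∪ B ∪ C = Finset.univ ∧
      A.card = 2 ^ (k - 1) ∧ B.card = 2 ^ (k - 1) ∧ C.card = 2 ^ (k - 1) ∧
      T.PerfOn A ∧ T.PerfOn B ∧ T.PerfOn C)

end PhyloTree

/-!
A TBR operation deleting the edge inducing `A | Aᶜ` is determined by its output tree, and the
possible outputs, together with `T` itself, are the trees obtained by joining `T|A` and `T|Aᶜ`
by a new edge from an edge of `T|A` to an edge of `T|Aᶜ`. As `T|A` is a binary tree with `|A|`
leaves it has `2|A| - 3` edges, and distinct choices of the two edges give distinct trees, so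
there are `(2|A| - 3)(2|Aᶜ| - 3) - 1` such operations.

In terms of split systems, an edge of `T|A` is a side `Y` of `T|A` up to `Y ↔ A \ Y`. Rooting
`T|A` on it yields the clusters inside `A` of the new tree, and maximality of the new split
system is inherited from the maximality of the split system of `T|A`. Conversely, a tree
agreeing with `T` on both sides of `A | Aᶜ` contains the split system built from the edge of
`T|A` between the two child clusters of `A`, hence equals it by maximality.

Summing over the non-trivial splits counts each operation twice, once through each side of its
split.
-/

section

variable {α : Type*} [DecidableEq α]

theorem Finset.eq_or_eq_sdiff_of_subset_or {A Y U : Finset α} (hY : Y ⊆ A)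
    (hYne : Y.Nonempty) (hAY : (A \ Y).Nonempty) (hU : U ⊆ A) (h1 : U ⊆ Y ∨ U ⊆ A \ Y)
    (h2 : A \ U ⊆ Y ∨ A \ U ⊆ A \ Y) : U = Y ∨ U = A \ Y := by
  simp only [subset_iff, Finset.Nonempty, mem_sdiff, Finset.ext_iff] at *
  grind

theorem Finset.subset_or_subset_sdiff_of_laminar {A Y V : Finset α} (hVA : V ⊂ A)
    (h₁ : V ⊆ Y ∨ Y ⊆ V ∨ Disjoint V Y)
    (h₂ : V ⊆ A \ Y ∨ A \ Y ⊆ V ∨ Disjoint V (A \ Y)) : V ⊆ Y ∨ V ⊆ A \ Y := by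
  rw [Finset.ssubset_iff_subset_ne] at hVA
  simp only [subset_iff, disjoint_left, mem_sdiff] at *
  grind

end

theorem Sym2.mk_compl_eq_mk_compl_iff {α : Type*} [BooleanAlgebra α] {a b : α} :
    s(a, aᶜ) = s(b, bᶜ) ↔ a = b ∨ a = bᶜ := by
  rw [Sym2.eq_iff]
  constructor
  · exact Or.imp And.left And.left
  · rintro (rfl | rfl)
    · exact .inl ⟨rfl, rfl⟩
    · exact .inr ⟨rfl, compl_compl b⟩

namespace PhyloTree

open Finset

variable {n : ℕ} {T T' : PhyloTree n} {A B S U V W Y Y' Z Z' u v : Finset (Fin n)}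

theorem sidesCompatible_iff :
    SidesCompatible A B ↔ A ⊆ B ∨ B ⊆ A ∨ A ⊆ Bᶜ ∨ Bᶜ ⊆ A := by
  simp only [SidesCompatible, subset_iff, disjoint_left, eq_univ_iff_forall, mem_union,
    mem_compl]
  grind

theorem sidesCompatible_comm :
    SidesCompatible A B ↔ SidesCompatible B A := by
  simp only [SidesCompatible, union_comm, disjoint_comm]
  tauto

theorem sidesCompatible_compl_right_iff :
    SidesCompatible A Bᶜ ↔ SidesCompatible A B := by
  simp only [sidesCompatible_iff, compl_compl]
  tauto

theorem sidesCompatible_compl_left_iff :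
    SidesCompatible Aᶜ B ↔ SidesCompatible A B := by
  rw [sidesCompatible_comm, sidesCompatible_compl_right_iff, sidesCompatible_comm]

theorem SidesCompatible.laminar_of_subset (hVA : V ⊆ A) (hWA : W ⊆ A) (hA : A ≠ univ)
    (h : SidesCompatible V W) : V ⊆ W ∨ W ⊆ V ∨ Disjoint V W :=
  h.imp_right fun h => h.imp_right fun h => h.resolve_right fun h =>
    hA (univ_subset_iff.1 (h ▸ union_subset hVA hWA))

theorem sides_injective : Function.Injective (sides : PhyloTree n → _) := by
  rintro ⟨⟩ ⟨⟩ h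
  simp_all

instance : Finite (PhyloTree n) := .of_injective _ sides_injective

theorem eq_of_sides_subset (h : T.sides ⊆ T'.sides) : T = T' := by
  refine sides_injective (h.antisymm fun S hS => ?_)
  exact T.maximal S (T'.proper S hS).1 (T'.proper S hS).2 fun B hB =>
    T'.compatible S hS B (h hB)

theorem compl_mem_sides_iff : Aᶜ ∈ T.sides ↔ A ∈ T.sides :=
  ⟨fun h => compl_compl A ▸ T.compl_mem _ h, T.compl_mem A⟩

theorem ne_empty_of_mem_sides (hA : A ∈ T.sides) : A ≠ ∅ :=
  (T.proper A hA).1.ne_empty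

/-- Sides inside `Aᶜ` are disjoint from `V`, and every other side is the complement of a side
inside `A` or inside `Aᶜ`. -/
theorem mem_sides_of_subset (hA : A ∈ T.sides) (hVA : V ⊆ A) (hV : V.Nonempty)
    (h : ∀ S ∈ T.sides, S ⊆ A → SidesCompatible V S) : V ∈ T.sides := by
  have hAu := (T.proper A hA).2
  refine T.maximal V hV (fun hVu => hAu (eq_univ_of_forall fun x => hVA (hVu ▸ mem_univ x)))
    fun S hS => ?_
  have hsub : ∀ S ∈ T.sides, S ⊆ Aᶜ → SidesCompatible V S := fun S _ hS =>
    Or.inr <| Or.inr <| Or.inl <| disjoint_of_subset_left hVA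
      (subset_compl_iff_disjoint_right.1 hS).symm
  rcases sidesCompatible_iff.1 (T.compatible S hS A hA) with h' | h' | h' | h'
  · exact h S hS h'
  · exact sidesCompatible_compl_right_iff.1 <|
      hsub _ (T.compl_mem S hS) (compl_subset_compl.2 h')
  · exact hsub S hS h'
  · exact sidesCompatible_compl_right_iff.1 <|
      h _ (T.compl_mem S hS) (compl_le_iff_compl_le.1 h')

/-- The child clusters `Y`, `Z` of the cluster `A`, for `T` rooted on the edge inducing
`A | Aᶜ`. -/
structure IsChildPair (T : PhyloTree n) (A Y Z : Finset (Fin n)) : Prop where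
  left_mem : Y ∈ T.sides
  right_mem : Z ∈ T.sides
  disjoint : Disjoint Y Z
  union_eq : Y ∪ Z = A
  subset_or_subset : ∀ S ∈ T.sides, S ⊂ A → S ⊆ Y ∨ S ⊆ Z

/-- The children of `A` are a largest cluster strictly inside `A` and its complement in `A`. -/
theorem exists_isChildPair (hA : A ∈ T.sides) (h2 : 2 ≤ #A) : ∃ Y Z, T.IsChildPair A Y Z := by
  classical
  have hne : (T.sides.filter (· ⊂ A)).Nonempty := by
    obtain ⟨x, hx⟩ := card_pos.1 (by omega : 0 < #A)
    refine ⟨{x}, mem_filter.2 ⟨T.singleton_mem x, Finset.ssubset_iff_subset_ne.2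
      ⟨singleton_subset_iff.2 hx, fun h => ?_⟩⟩⟩
    have := card_singleton x ▸ congrArg card h
    omega
  obtain ⟨Y, hYmem, hYmax⟩ := exists_max_image _ card hne
  obtain ⟨hY, hYA⟩ := mem_filter.1 hYmem
  have hAu := (T.proper A hA).2
  have hlam : ∀ S ∈ T.sides, S ⊂ A → S ⊆ Y ∨ Disjoint S Y := by
    intro S hS hSA
    rcases T.compatible S hS Y hY with h | h | h | h
    · exact .inl h
    · exact .inl (eq_of_subset_of_card_le h (hYmax S (mem_filter.2 ⟨hS, hSA⟩))).ge
    · exact .inr h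
    · exact absurd (univ_subset_iff.1 (h ▸ union_subset hSA.1 hYA.1)) hAu
  have hZ : A \ Y ∈ T.sides := by
    refine mem_sides_of_subset hA sdiff_subset (sdiff_nonempty.2 hYA.not_subset)
      fun S hS hSA => ?_
    rcases hSA.eq_or_ssubset with rfl | hSA
    · exact .inl sdiff_subset
    rcases hlam S hS hSA with h | h
    · exact .inr <| .inr <| .inl <| sdiff_disjoint.mono_right h
    · exact .inr <| .inl <| subset_sdiff.2 ⟨hSA.1, h⟩
  refine ⟨Y, A \ Y, hY, hZ, disjoint_sdiff, union_sdiff_of_subset hYA.1, fun S hS hSA => ?_⟩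
  exact (hlam S hS hSA).imp_right fun h => subset_sdiff.2 ⟨hSA.1, h⟩

theorem IsChildPair.symm (hc : T.IsChildPair A Y Z) : T.IsChildPair A Z Y :=
  ⟨hc.right_mem, hc.left_mem, hc.disjoint.symm, union_comm Y Z ▸ hc.union_eq,
    fun S hS hSA => (hc.subset_or_subset S hS hSA).symm⟩

theorem IsChildPair.left_nonempty (hc : T.IsChildPair A Y Z) : Y.Nonempty :=
  (T.proper Y hc.left_mem).1

theorem IsChildPair.right_nonempty (hc : T.IsChildPair A Y Z) : Z.Nonempty :=
  hc.symm.left_nonempty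

theorem IsChildPair.left_subset (hc : T.IsChildPair A Y Z) : Y ⊆ A :=
  hc.union_eq ▸ subset_union_left

theorem IsChildPair.sdiff_left (hc : T.IsChildPair A Y Z) : A \ Y = Z := by
  rw [← hc.union_eq, union_sdiff_left, sdiff_eq_self_of_disjoint hc.disjoint.symm]

theorem IsChildPair.left_ssubset (hc : T.IsChildPair A Y Z) : Y ⊂ A :=
  Finset.ssubset_iff_subset_ne.2 ⟨hc.left_subset, fun h =>
    hc.right_nonempty.ne_empty (by rw [← hc.sdiff_left, h, sdiff_self, bot_eq_empty])⟩

theorem IsChildPair.card_add (hc : T.IsChildPair A Y Z) : #Y + #Z = #A := by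
  rw [← card_union_of_disjoint hc.disjoint, hc.union_eq]

theorem IsChildPair.eq_of_right_subset (hc : T.IsChildPair A Y Z) (hS : S ∈ T.sides)
    (hSA : S ⊆ A) (hZS : Z ⊆ S) : S = A ∨ S = Z := by
  rcases hSA.eq_or_ssubset with rfl | hSA
  · exact .inl rfl
  rcases hc.subset_or_subset S hS hSA with h | h
  · obtain ⟨x, hx⟩ := hc.right_nonempty
    exact absurd (h (hZS hx)) (disjoint_right.1 hc.disjoint hx)
  · exact .inr (h.antisymm hZS)

theorem IsChildPair.filter_subset_eq (hc : T.IsChildPair A Y Z) (hA : A ∈ T.sides) :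
    T.sides.filter (· ⊆ A) =
      insert A (T.sides.filter (· ⊆ Y) ∪ T.sides.filter (· ⊆ Z)) := by
  ext S
  simp only [mem_filter, mem_insert, mem_union]
  constructor
  · rintro ⟨hS, hSA⟩
    rcases hSA.eq_or_ssubset with rfl | hSA
    · exact .inl rfl
    · exact .inr ((hc.subset_or_subset S hS hSA).imp (⟨hS, ·⟩) (⟨hS, ·⟩))
  · rintro (rfl | ⟨hS, h⟩ | ⟨hS, h⟩)
    · exact ⟨hA, subset_rfl⟩
    · exact ⟨hS, h.trans hc.left_subset⟩
    · exact ⟨hS, h.trans hc.symm.left_subset⟩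

theorem IsChildPair.eq_or_eq_of_sdiff_mem (hc : T.IsChildPair A Y Z) (hU : U ∈ T.sides)
    (hUA : U ⊂ A) (hAU : A \ U ∈ T.sides) : U = Y ∨ U = Z := by
  have hAUA : A \ U ⊂ A := sdiff_ssubset hUA.1 (T.proper U hU).1
  have := eq_or_eq_sdiff_of_subset_or hc.left_subset hc.left_nonempty
    (hc.sdiff_left ▸ hc.right_nonempty) hUA.1 (hc.sdiff_left ▸ hc.subset_or_subset U hU hUA)
    (hc.sdiff_left ▸ hc.subset_or_subset _ hAU hAUA)
  rwa [hc.sdiff_left] at this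

/-- A rooted binary tree with `k` leaves has `2k - 1` clusters. -/
theorem card_filter_subset (hA : A ∈ T.sides) :
    #(T.sides.filter (· ⊆ A)) = 2 * #A - 1 := by
  induction A using Finset.strongInduction with
  | H A ih =>
    rcases lt_or_ge #A 2 with h1 | h2
    · have := (T.proper A hA).1.card_pos
      obtain ⟨x, rfl⟩ := (card_eq_one (s := A)).1 (by omega)
      have : T.sides.filter (· ⊆ {x}) = {{x}} := by
        ext S
        simp only [mem_filter, mem_singleton, subset_singleton_iff]
        constructor
        · rintro ⟨hS, rfl | rfl⟩
          · exact absurd rfl (ne_empty_of_mem_sides hS)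
          · rfl
        · rintro rfl
          exact ⟨T.singleton_mem x, .inr rfl⟩
      rw [this, card_singleton, card_singleton]
    obtain ⟨Y, Z, hc⟩ := exists_isChildPair hA h2
    have hAnot : A ∉ T.sides.filter (· ⊆ Y) ∪ T.sides.filter (· ⊆ Z) := by
      simp only [mem_union, mem_filter, not_or, not_and]
      exact ⟨fun _ h => hc.left_ssubset.not_subset h,
        fun _ h => hc.symm.left_ssubset.not_subset h⟩
    have hdisj : Disjoint (T.sides.filter (· ⊆ Y)) (T.sides.filter (· ⊆ Z)) :=
      disjoint_filter.2 fun S hS hY hZ =>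
        (T.proper S hS).1.ne_empty (disjoint_self.1 (hc.disjoint.mono hY hZ))
    rw [hc.filter_subset_eq hA, card_insert_of_notMem hAnot, card_union_of_disjoint hdisj,
      ih Y hc.left_ssubset hc.left_mem, ih Z hc.symm.left_ssubset hc.right_mem]
    have := hc.card_add
    have := hc.left_nonempty.card_pos
    have := hc.right_nonempty.card_pos
    omega

/-- The split system of the tree `T|A` on the leaf set `A`. -/
def properRestrict (T : PhyloTree n) (A : Finset (Fin n)) : Finset (Finset (Fin n)) :=
  (T.restrict A).filter fun U => U ≠ ∅ ∧ U ≠ A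

theorem mem_restrict : U ∈ T.restrict A ↔ ∃ S ∈ T.sides, S ∩ A = U := by
  simp [restrict]

theorem inter_mem_restrict (hS : S ∈ T.sides) : S ∩ A ∈ T.restrict A :=
  mem_restrict.2 ⟨S, hS, rfl⟩

theorem mem_restrict_of_subset (hS : S ∈ T.sides) (hSA : S ⊆ A) : S ∈ T.restrict A :=
  inter_eq_left.2 hSA ▸ inter_mem_restrict hS

theorem empty_mem_restrict (hA : A ∈ T.sides) : ∅ ∈ T.restrict A := by
  have := inter_mem_restrict (A := A) (T.compl_mem A hA)
  rwa [inter_comm, inter_compl] at this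

theorem subset_of_mem_restrict (hU : U ∈ T.restrict A) : U ⊆ A := by
  obtain ⟨S, -, rfl⟩ := mem_restrict.1 hU
  exact inter_subset_right

theorem sdiff_mem_restrict (hU : U ∈ T.restrict A) : A \ U ∈ T.restrict A := by
  obtain ⟨S, hS, rfl⟩ := mem_restrict.1 hU
  convert inter_mem_restrict (A := A) (T.compl_mem S hS) using 1
  ext; simp; tauto

theorem mem_properRestrict :
    U ∈ T.properRestrict A ↔ U ∈ T.restrict A ∧ U ≠ ∅ ∧ U ≠ A :=
  mem_filter

theorem subset_of_mem_properRestrict (hU : U ∈ T.properRestrict A) : U ⊆ A :=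
  subset_of_mem_restrict (mem_properRestrict.1 hU).1

theorem nonempty_of_mem_properRestrict (hU : U ∈ T.properRestrict A) : U.Nonempty :=
  nonempty_iff_ne_empty.2 (mem_properRestrict.1 hU).2.1

theorem sdiff_nonempty_of_mem_properRestrict (hU : U ∈ T.properRestrict A) :
    (A \ U).Nonempty :=
  sdiff_nonempty.2 fun h => (mem_properRestrict.1 hU).2.2 (subset_of_mem_restrict
    (mem_properRestrict.1 hU).1 |>.antisymm h)

theorem sdiff_mem_properRestrict (hU : U ∈ T.properRestrict A) :
    A \ U ∈ T.properRestrict A := by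
  have hUA := subset_of_mem_properRestrict hU
  refine mem_properRestrict.2 ⟨sdiff_mem_restrict (mem_properRestrict.1 hU).1,
    (sdiff_nonempty_of_mem_properRestrict hU).ne_empty, fun h => ?_⟩
  obtain ⟨x, hx⟩ := nonempty_of_mem_properRestrict hU
  exact (mem_sdiff.1 (h ▸ hUA hx)).2 hx

theorem properRestrict_eq (hA : A ∈ T.sides) :
    T.properRestrict A =
      T.sides.filter (· ⊂ A) ∪ (T.sides.filter (· ⊂ A)).image (A \ ·) := by
  ext U
  simp only [mem_properRestrict, mem_restrict, mem_union, mem_filter, mem_image]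
  constructor
  · rintro ⟨⟨S, hS, rfl⟩, h0, hA'⟩
    rcases sidesCompatible_iff.1 (T.compatible S hS A hA) with h | h | h | h
    · rw [inter_eq_left.2 h] at hA' ⊢
      exact .inl ⟨hS, Finset.ssubset_iff_subset_ne.2 ⟨h, hA'⟩⟩
    · exact absurd (inter_eq_right.2 h) hA'
    · exact absurd (disjoint_iff_inter_eq_empty.1 (subset_compl_iff_disjoint_right.1 h)) h0
    · refine .inr ⟨Sᶜ, ⟨T.compl_mem S hS,
        Finset.ssubset_iff_subset_ne.2 ⟨compl_le_iff_compl_le.1 h, ?_⟩⟩, ?_⟩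
      · rintro hSA
        apply h0
        rw [← compl_compl S, hSA, inter_comm, inter_compl]
      · ext; simp; tauto
  · rintro (⟨hU, hUA⟩ | ⟨W, ⟨hW, hWA⟩, rfl⟩)
    · exact ⟨⟨U, hU, inter_eq_left.2 hUA.1⟩, ne_empty_of_mem_sides hU, hUA.ne⟩
    · refine ⟨⟨Wᶜ, T.compl_mem W hW, by ext; simp; tauto⟩,
        (sdiff_nonempty.2 hWA.not_subset).ne_empty, fun h => ?_⟩
      obtain ⟨x, hx⟩ := (T.proper W hW).1
      exact (mem_sdiff.1 (h ▸ hWA.1 hx)).2 hx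

/-- There are `2 #A - 2` clusters strictly inside `A`, as many complements of them in `A`, and
only the two children of `A` are both. -/
theorem card_properRestrict (hA : A ∈ T.sides) (h2 : 2 ≤ #A) :
    #(T.properRestrict A) = 4 * #A - 6 := by
  obtain ⟨Y, Z, hc⟩ := exists_isChildPair hA h2
  rw [properRestrict_eq hA]
  set C := T.sides.filter (· ⊂ A)
  have hC : #C = 2 * #A - 2 := by
    have : T.sides.filter (· ⊆ A) = insert A C := by
      ext S
      simp only [C, mem_insert, mem_filter, subset_iff_ssubset_or_eq]
      constructor
      · rintro ⟨hS, h | rfl⟩ <;> tauto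
      · rintro (rfl | h) <;> tauto
    have h' := card_filter_subset hA
    rw [this, card_insert_of_notMem (by simp [C])] at h'
    omega
  have hinj : Set.InjOn (A \ ·) C := fun W₁ h₁ W₂ h₂ he => by
    simpa [Finset.sdiff_sdiff_eq_self (mem_filter.1 h₁).2.1,
      Finset.sdiff_sdiff_eq_self (mem_filter.1 h₂).2.1] using congrArg (A \ ·) he
  have hinter : C ∩ C.image (A \ ·) = {Y, Z} := by
    ext U
    simp only [C, mem_inter, mem_filter, mem_image, mem_insert, mem_singleton]
    constructor
    · rintro ⟨⟨hU, hUA⟩, W, ⟨hW, hWA⟩, rfl⟩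
      refine hc.eq_or_eq_of_sdiff_mem hU hUA ?_
      rwa [Finset.sdiff_sdiff_eq_self hWA.1]
    · rintro (h | h) <;> rw [h]
      · exact ⟨⟨hc.left_mem, hc.left_ssubset⟩, Z, ⟨hc.right_mem, hc.symm.left_ssubset⟩,
          hc.symm.sdiff_left⟩
      · exact ⟨⟨hc.right_mem, hc.symm.left_ssubset⟩, Y, ⟨hc.left_mem, hc.left_ssubset⟩,
          hc.sdiff_left⟩
  have hYZ : Y ≠ Z := fun h => hc.left_nonempty.ne_empty (disjoint_self.1 (h ▸ hc.disjoint))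
  have hsum := card_union_add_card_inter C (C.image (A \ ·))
  rw [hinter, card_image_of_injOn hinj, card_pair hYZ, hC] at hsum
  omega

/-- Compatibility of `V | A \ V` and `W | A \ W` as splits of the leaf set `A`. -/
def CompatibleIn (A V W : Finset (Fin n)) : Prop :=
  V ⊆ W ∨ W ⊆ V ∨ Disjoint V W ∨ V ∪ W = A

theorem compatibleIn_sdiff_right (hV : V ⊆ A) (hW : W ⊆ A) :
    CompatibleIn A V (A \ W) ↔ CompatibleIn A V W := by
  simp only [CompatibleIn, subset_iff, disjoint_left, mem_sdiff, Finset.ext_iff,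
    mem_union] at *
  grind

theorem compatibleIn_sdiff_left (hV : V ⊆ A) (hW : W ⊆ A) :
    CompatibleIn A (A \ V) W ↔ CompatibleIn A V W := by
  simp only [CompatibleIn, subset_iff, disjoint_left, mem_sdiff, Finset.ext_iff,
    mem_union] at *
  grind

theorem compatibleIn_of_mem_restrict (hU : U ∈ T.restrict A) (hV : V ∈ T.restrict A) :
    CompatibleIn A U V := by
  obtain ⟨S, hS, rfl⟩ := mem_restrict.1 hU
  obtain ⟨S', hS', rfl⟩ := mem_restrict.1 hV
  rcases T.compatible S hS S' hS' with h | h | h | h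
  · exact .inl (inter_subset_inter_right h)
  · exact .inr <| .inl (inter_subset_inter_right h)
  · exact .inr <| .inr <| .inl (h.mono inter_subset_left inter_subset_left)
  · exact .inr <| .inr <| .inr (by rw [← union_inter_distrib_right, h, univ_inter])

theorem IsChildPair.mem_sides_of_subset_left (hc : T.IsChildPair A Y Z) (hA : A ∈ T.sides)
    (hWY : W ⊆ Y) (hW : W.Nonempty) (h : ∀ S ∈ T.sides, S ⊆ A → CompatibleIn A W S) :
    W ∈ T.sides := by
  refine mem_sides_of_subset hA (hWY.trans hc.left_subset) hW fun S hS hSA => ?_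
  rcases h S hS hSA with h | h | h | h
  · exact .inl h
  · exact .inr <| .inl h
  · exact .inr <| .inr <| .inl h
  · have hZS : Z ⊆ S := fun x hx => by
      have hxA : x ∈ W ∪ S := h ▸ hc.symm.left_subset hx
      exact (mem_union.1 hxA).resolve_left fun hxW =>
        disjoint_left.1 hc.disjoint (hWY hxW) hx
    rcases hc.eq_of_right_subset hS hSA hZS with rfl | rfl
    · exact .inl (hWY.trans hc.left_subset)
    · exact .inr <| .inr <| .inl (hc.disjoint.mono_left hWY)

/-- Either `V` or `A \ V` lies inside a child of `A`, and is then a side of `T`. -/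
theorem mem_restrict_of_compatibleIn (hA : A ∈ T.sides) (hVA : V ⊆ A)
    (h : ∀ S ∈ T.sides, S ⊆ A → CompatibleIn A V S) : V ∈ T.restrict A := by
  rcases V.eq_empty_or_nonempty with rfl | hV
  · exact empty_mem_restrict hA
  rcases hVA.eq_or_ssubset with rfl | hVA'
  · exact mem_restrict_of_subset hA subset_rfl
  have hAV : (A \ V).Nonempty := sdiff_nonempty.2 hVA'.not_subset
  have h2 : 2 ≤ #A := by
    obtain ⟨x, hx⟩ := hV
    obtain ⟨y, hy⟩ := hAV
    exact one_lt_card_iff.2 ⟨x, y, hVA hx, (mem_sdiff.1 hy).1,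
      fun hxy => (mem_sdiff.1 hy).2 (hxy ▸ hx)⟩
  have h' : ∀ S ∈ T.sides, S ⊆ A → CompatibleIn A (A \ V) S := fun S hS hSA =>
    (compatibleIn_sdiff_left hVA hSA).2 (h S hS hSA)
  obtain ⟨Y, Z, hc⟩ := exists_isChildPair hA h2
  suffices V ∈ T.sides ∨ A \ V ∈ T.sides by
    rcases this with hV | hV
    · exact mem_restrict_of_subset hV hVA
    · simpa [Finset.sdiff_sdiff_eq_self hVA] using
        sdiff_mem_restrict (mem_restrict_of_subset hV sdiff_subset)
  have hYA := hc.left_subset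
  rcases h Y hc.left_mem hYA with hVY | hYV | hVY | hVY
  · exact .inl (hc.mem_sides_of_subset_left hA hVY hV h)
  · refine .inr (hc.symm.mem_sides_of_subset_left hA ?_ hAV h')
    rw [← hc.sdiff_left]
    exact sdiff_subset_sdiff subset_rfl hYV
  · refine .inl (hc.symm.mem_sides_of_subset_left hA ?_ hV h)
    rw [← hc.sdiff_left]
    exact subset_sdiff.2 ⟨hVA, hVY⟩
  · refine .inr (hc.mem_sides_of_subset_left hA ?_ hAV h')
    rw [← hVY, union_sdiff_left]
    exact sdiff_subset

/-- The clusters of `T|A` rooted on its edge inducing the split `Y | A \ Y`. -/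
def clustersAt (T : PhyloTree n) (A Y : Finset (Fin n)) : Finset (Finset (Fin n)) :=
  (T.properRestrict A).filter fun W => W ⊆ Y ∨ W ⊆ A \ Y

/-- The clusters on either side of the new edge when `T|A` and `T|Aᶜ` are joined by an edge
between their edges inducing `Y | A \ Y` and `Z | Aᶜ \ Z`. -/
def graftClusters (T : PhyloTree n) (A Y Z : Finset (Fin n)) : Finset (Finset (Fin n)) :=
  insert A (T.clustersAt A Y) ∪ insert Aᶜ (T.clustersAt Aᶜ Z)

/-- The split system of the tree obtained by this reconnection. -/
def graftSides (T : PhyloTree n) (A Y Z : Finset (Fin n)) : Finset (Finset (Fin n)) :=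
  T.graftClusters A Y Z ∪ (T.graftClusters A Y Z).image compl

theorem mem_clustersAt :
    W ∈ T.clustersAt A Y ↔ W ∈ T.properRestrict A ∧ (W ⊆ Y ∨ W ⊆ A \ Y) :=
  mem_filter

theorem subset_of_mem_clustersAt (hW : W ∈ T.clustersAt A Y) : W ⊆ A :=
  subset_of_mem_properRestrict (mem_clustersAt.1 hW).1

theorem ssubset_of_mem_clustersAt (hW : W ∈ T.clustersAt A Y) : W ⊂ A :=
  Finset.ssubset_iff_subset_ne.2 ⟨subset_of_mem_clustersAt hW,
    (mem_properRestrict.1 (mem_clustersAt.1 hW).1).2.2⟩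

theorem clustersAt_sdiff (hY : Y ⊆ A) : T.clustersAt A (A \ Y) = T.clustersAt A Y :=
  filter_congr fun W _ => by rw [Finset.sdiff_sdiff_eq_self hY, or_comm]

theorem self_mem_clustersAt (hY : Y ∈ T.properRestrict A) : Y ∈ T.clustersAt A Y :=
  mem_clustersAt.2 ⟨hY, .inl subset_rfl⟩

theorem sdiff_mem_clustersAt (hY : Y ∈ T.properRestrict A) : A \ Y ∈ T.clustersAt A Y :=
  mem_clustersAt.2 ⟨sdiff_mem_properRestrict hY, .inr subset_rfl⟩

theorem mem_or_sdiff_mem_clustersAt (hY : Y ∈ T.properRestrict A)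
    (hU : U ∈ T.properRestrict A) : U ∈ T.clustersAt A Y ∨ A \ U ∈ T.clustersAt A Y := by
  have hU' := sdiff_mem_properRestrict hU
  have hUA := subset_of_mem_properRestrict hU
  rcases compatibleIn_of_mem_restrict (mem_properRestrict.1 hU).1 (mem_properRestrict.1 hY).1
    with h | h | h | h
  · exact .inl (mem_clustersAt.2 ⟨hU, .inl h⟩)
  · exact .inr (mem_clustersAt.2 ⟨hU', .inr (sdiff_subset_sdiff subset_rfl h)⟩)
  · exact .inl (mem_clustersAt.2 ⟨hU, .inr (subset_sdiff.2 ⟨hUA, h⟩)⟩)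
  · refine .inr (mem_clustersAt.2 ⟨hU', .inl ?_⟩)
    rw [← h, union_sdiff_left]
    exact sdiff_subset

theorem clustersAt_laminar (hY : Y ∈ T.properRestrict A) {W₁ W₂ : Finset (Fin n)}
    (h₁ : W₁ ∈ T.clustersAt A Y) (h₂ : W₂ ∈ T.clustersAt A Y) :
    W₁ ⊆ W₂ ∨ W₂ ⊆ W₁ ∨ Disjoint W₁ W₂ := by
  obtain ⟨h₁, hW₁⟩ := mem_clustersAt.1 h₁
  obtain ⟨h₂, hW₂⟩ := mem_clustersAt.1 h₂
  have hYne := nonempty_of_mem_properRestrict hY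
  have hAY := sdiff_nonempty_of_mem_properRestrict hY
  have hYA := subset_of_mem_properRestrict hY
  rcases compatibleIn_of_mem_restrict (mem_properRestrict.1 h₁).1 (mem_properRestrict.1 h₂).1
    with h | h | h | h
  · exact .inl h
  · exact .inr <| .inl h
  · exact .inr <| .inr h
  · simp only [subset_iff, Finset.Nonempty, mem_sdiff, disjoint_left, Finset.ext_iff,
      mem_union] at *
    grind

theorem mem_graftClusters :
    u ∈ T.graftClusters A Y Z ↔
      (u = A ∨ u ∈ T.clustersAt A Y) ∨ (u = Aᶜ ∨ u ∈ T.clustersAt Aᶜ Z) := by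
  simp only [graftClusters, mem_union, mem_insert]

theorem mem_graftSides :
    u ∈ T.graftSides A Y Z ↔
      u ∈ T.graftClusters A Y Z ∨ uᶜ ∈ T.graftClusters A Y Z := by
  simp [graftSides]

theorem mem_graftSides_of_mem_graftClusters (hu : u ∈ T.graftClusters A Y Z) : u ∈ T.graftSides A Y Z :=
  mem_graftSides.2 (.inl hu)

theorem self_mem_graftSides : A ∈ T.graftSides A Y Z :=
  mem_graftSides_of_mem_graftClusters (mem_graftClusters.2 (.inl (.inl rfl)))

theorem compl_self_mem_graftSides : Aᶜ ∈ T.graftSides A Y Z :=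
  mem_graftSides_of_mem_graftClusters (mem_graftClusters.2 (.inr (.inl rfl)))

theorem mem_graftSides_of_mem_clustersAt (hW : W ∈ T.clustersAt A Y) :
    W ∈ T.graftSides A Y Z :=
  mem_graftSides_of_mem_graftClusters (mem_graftClusters.2 (.inl (.inr hW)))

theorem compl_mem_graftSides (hu : u ∈ T.graftSides A Y Z) :
    uᶜ ∈ T.graftSides A Y Z := by
  rw [mem_graftSides, compl_compl] at *
  exact hu.symm

theorem graftClusters_compl : T.graftClusters Aᶜ Z Y = T.graftClusters A Y Z := by
  rw [graftClusters, graftClusters, compl_compl, union_comm]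

theorem graftSides_compl : T.graftSides Aᶜ Z Y = T.graftSides A Y Z := by
  rw [graftSides, graftSides, graftClusters_compl]

theorem graftSides_sdiff_left (hY : Y ⊆ A) :
    T.graftSides A (A \ Y) Z = T.graftSides A Y Z := by
  rw [graftSides, graftSides, graftClusters, graftClusters, clustersAt_sdiff hY]

theorem graftSides_sdiff_right (hZ : Z ⊆ Aᶜ) :
    T.graftSides A Y (Aᶜ \ Z) = T.graftSides A Y Z := by
  rw [graftSides, graftSides, graftClusters, graftClusters, clustersAt_sdiff hZ]

theorem singleton_mem_clustersAt (hY : Y ∈ T.properRestrict A) {x : Fin n} (hx : x ∈ A) :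
    {x} ∈ T.clustersAt A Y := by
  have hcard : #{x} < #A := by
    have := card_lt_card (Finset.ssubset_iff_subset_ne.2
      ⟨subset_of_mem_properRestrict hY, (mem_properRestrict.1 hY).2.2⟩)
    have := (nonempty_of_mem_properRestrict hY).card_pos
    rw [card_singleton]
    omega
  refine mem_clustersAt.2 ⟨mem_properRestrict.2 ⟨mem_restrict_of_subset (T.singleton_mem x)
    (singleton_subset_iff.2 hx), singleton_ne_empty x, fun h => (h ▸ hcard).false⟩, ?_⟩
  by_cases hxY : x ∈ Y
  · exact .inl (singleton_subset_iff.2 hxY)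
  · exact .inr (singleton_subset_iff.2 (mem_sdiff.2 ⟨hx, hxY⟩))

theorem subset_or_subset_compl_of_mem_graftClusters (hu : u ∈ T.graftClusters A Y Z) :
    u ⊆ A ∨ u ⊆ Aᶜ := by
  rcases mem_graftClusters.1 hu with (rfl | h) | (rfl | h)
  · exact .inl subset_rfl
  · exact .inl (subset_of_mem_clustersAt h)
  · exact .inr subset_rfl
  · exact .inr (subset_of_mem_clustersAt h)

theorem proper_of_mem_graftClusters (hA : A ∈ T.sides) (hu : u ∈ T.graftClusters A Y Z) :
    u.Nonempty ∧ u ≠ univ := by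
  have hne : ∀ {B}, B ∈ T.sides → B ≠ univ := fun hB => (T.proper _ hB).2
  refine ⟨?_, ?_⟩
  · rcases mem_graftClusters.1 hu with (rfl | h) | (rfl | h)
    · exact (T.proper _ hA).1
    · exact nonempty_of_mem_properRestrict (mem_clustersAt.1 h).1
    · exact (T.proper _ (T.compl_mem A hA)).1
    · exact nonempty_of_mem_properRestrict (mem_clustersAt.1 h).1
  · rintro rfl
    rcases subset_or_subset_compl_of_mem_graftClusters hu with h | h
    · exact hne hA (univ_subset_iff.1 h)
    · exact hne (T.compl_mem A hA) (univ_subset_iff.1 h)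

theorem proper_of_mem_graftSides (hA : A ∈ T.sides) (hu : u ∈ T.graftSides A Y Z) :
    u.Nonempty ∧ u ≠ univ := by
  rcases mem_graftSides.1 hu with hu | hu
  · exact proper_of_mem_graftClusters hA hu
  · obtain ⟨h₁, h₂⟩ := proper_of_mem_graftClusters hA hu
    exact ⟨nonempty_iff_ne_empty.2 fun h => h₂ (by rw [h, compl_empty]),
      fun h => h₁.ne_empty (by rw [h, compl_univ])⟩

theorem singleton_mem_graftSides (hY : Y ∈ T.properRestrict A)
    (hZ : Z ∈ T.properRestrict Aᶜ) (x : Fin n) : {x} ∈ T.graftSides A Y Z := by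
  refine mem_graftSides_of_mem_graftClusters (mem_graftClusters.2 ?_)
  by_cases hx : x ∈ A
  · exact .inl (.inr (singleton_mem_clustersAt hY hx))
  · exact .inr (.inr (singleton_mem_clustersAt hZ (mem_compl.2 hx)))

theorem graftClusters_laminar (hY : Y ∈ T.properRestrict A)
    (hZ : Z ∈ T.properRestrict Aᶜ) (hu : u ∈ T.graftClusters A Y Z)
    (hv : v ∈ T.graftClusters A Y Z) : u ⊆ v ∨ v ⊆ u ∨ Disjoint u v := by
  have side : ∀ {B W u v}, W ∈ T.properRestrict B → u ∈ insert B (T.clustersAt B W) →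
      v ∈ insert B (T.clustersAt B W) → u ⊆ v ∨ v ⊆ u ∨ Disjoint u v := by
    intro B W u v hW hu hv
    rcases mem_insert.1 hu with rfl | hu
    · exact .inr (.inl ((mem_insert.1 hv).elim (·.le) subset_of_mem_clustersAt))
    rcases mem_insert.1 hv with rfl | hv
    · exact .inl (subset_of_mem_clustersAt hu)
    exact clustersAt_laminar hW hu hv
  have sub : ∀ {B W u}, u ∈ insert B (T.clustersAt B W) → u ⊆ B := fun hu =>
    (mem_insert.1 hu).elim (·.le) subset_of_mem_clustersAt
  have cross : ∀ {u v}, u ⊆ A → v ⊆ Aᶜ → Disjoint u v := fun hu hv =>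
    disjoint_of_subset_left hu (subset_compl_iff_disjoint_right.1 hv).symm
  rcases mem_union.1 hu with hu | hu <;> rcases mem_union.1 hv with hv | hv
  · exact side hY hu hv
  · exact .inr <| .inr <| cross (sub hu) (sub hv)
  · exact .inr <| .inr <| (cross (sub hv) (sub hu)).symm
  · exact side hZ hu hv

theorem graftSides_compatible (hY : Y ∈ T.properRestrict A) (hZ : Z ∈ T.properRestrict Aᶜ)
    (hu : u ∈ T.graftSides A Y Z) (hv : v ∈ T.graftSides A Y Z) : SidesCompatible u v := by
  have base : ∀ {u v}, u ∈ T.graftClusters A Y Z → v ∈ T.graftClusters A Y Z →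
      SidesCompatible u v := fun hu hv =>
    (graftClusters_laminar hY hZ hu hv).elim .inl fun h => .inr (h.imp_right .inl)
  rcases mem_graftSides.1 hu with hu | hu <;> rcases mem_graftSides.1 hv with hv | hv
  · exact base hu hv
  · exact sidesCompatible_compl_right_iff.1 (base hu hv)
  · exact sidesCompatible_compl_left_iff.1 (base hu hv)
  · exact sidesCompatible_compl_left_iff.1 (sidesCompatible_compl_right_iff.1 (base hu hv))

/-- The maximality of `graftSides` inside `A` is inherited from that of `T|A`. -/
theorem mem_graftSides_of_subset (hA : A ∈ T.sides) (hY : Y ∈ T.properRestrict A)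
    (hVA : V ⊆ A) (hV : V.Nonempty) (h : ∀ u ∈ T.graftSides A Y Z, SidesCompatible V u) :
    V ∈ T.graftSides A Y Z := by
  have hAu := (T.proper A hA).2
  rcases hVA.eq_or_ssubset with rfl | hVA'
  · exact self_mem_graftSides
  have hin : ∀ W ∈ T.clustersAt A Y, V ⊆ W ∨ W ⊆ V ∨ Disjoint V W := fun W hW =>
    SidesCompatible.laminar_of_subset hVA (subset_of_mem_clustersAt hW) hAu
      (h W (mem_graftSides_of_mem_clustersAt hW))
  have hVr : V ∈ T.properRestrict A := by
    refine mem_properRestrict.2 ⟨mem_restrict_of_compatibleIn hA hVA fun S hS hSA => ?_,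
      hV.ne_empty, hVA'.ne⟩
    rcases hSA.eq_or_ssubset with rfl | hSA'
    · exact .inl hVA
    have hSr : S ∈ T.properRestrict A :=
      mem_properRestrict.2 ⟨mem_restrict_of_subset hS hSA, ne_empty_of_mem_sides hS, hSA'.ne⟩
    rcases mem_or_sdiff_mem_clustersAt hY hSr with hS' | hS'
    · exact (hin S hS').imp_right (.imp_right .inl)
    · exact (compatibleIn_sdiff_right hVA hSA).1 ((hin _ hS').imp_right (.imp_right .inl))
  have h₁ := hin Y (self_mem_clustersAt hY)
  have h₂ := hin (A \ Y) (sdiff_mem_clustersAt hY)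
  exact mem_graftSides_of_mem_clustersAt
    (mem_clustersAt.2 ⟨hVr, subset_or_subset_sdiff_of_laminar hVA' h₁ h₂⟩)

theorem mem_graftSides_of_compatible (hA : A ∈ T.sides) (hY : Y ∈ T.properRestrict A)
    (hZ : Z ∈ T.properRestrict Aᶜ) (hV : V.Nonempty) (hVu : V ≠ univ)
    (h : ∀ u ∈ T.graftSides A Y Z, SidesCompatible V u) : V ∈ T.graftSides A Y Z := by
  have hc : ∀ u ∈ T.graftSides A Y Z, SidesCompatible Vᶜ u := fun u hu =>
    sidesCompatible_compl_left_iff.2 (h u hu)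
  have hVc : Vᶜ.Nonempty := nonempty_iff_ne_empty.2 fun h => hVu (by simpa using h)
  have hAc : ∀ {W}, W ⊆ Aᶜ → W.Nonempty →
      (∀ u ∈ T.graftSides A Y Z, SidesCompatible W u) → W ∈ T.graftSides A Y Z :=
    fun hW hne h => by
    rw [← graftSides_compl] at h ⊢
    exact mem_graftSides_of_subset (T.compl_mem A hA) hZ hW hne h
  rcases sidesCompatible_iff.1 (h A self_mem_graftSides) with h' | h' | h' | h'
  · exact mem_graftSides_of_subset hA hY h' hV h
  · simpa using compl_mem_graftSides (hAc (compl_subset_compl.2 h') hVc hc)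
  · exact hAc h' hV h
  · simpa using compl_mem_graftSides
      (mem_graftSides_of_subset hA hY (compl_le_iff_compl_le.1 h') hVc hc)

theorem exists_sides_eq_graftSides (hA : A ∈ T.sides) (hY : Y ∈ T.properRestrict A)
    (hZ : Z ∈ T.properRestrict Aᶜ) : ∃ T' : PhyloTree n, T'.sides = T.graftSides A Y Z :=
  ⟨⟨T.graftSides A Y Z, fun _ => proper_of_mem_graftSides hA, fun _ => compl_mem_graftSides,
    singleton_mem_graftSides hY hZ, fun _ hu _ hv => graftSides_compatible hY hZ hu hv,
    fun _ hV hVu h => mem_graftSides_of_compatible hA hY hZ hV hVu h⟩, rfl⟩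

theorem restrict_graftSides (hA : A ∈ T.sides) (hY : Y ∈ T.properRestrict A) :
    (T.graftSides A Y Z).image (· ∩ A) = T.restrict A := by
  have hGC : ∀ w ∈ T.graftClusters A Y Z, w ∩ A ∈ T.restrict A := by
    intro w hw
    rcases mem_graftClusters.1 hw with (rfl | h) | (rfl | h)
    · rw [inter_self]
      exact mem_restrict_of_subset hA subset_rfl
    · rw [inter_eq_left.2 (subset_of_mem_clustersAt h)]
      exact (mem_properRestrict.1 (mem_clustersAt.1 h).1).1
    · rw [inter_comm, inter_compl]
      exact empty_mem_restrict hA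
    · rw [disjoint_iff_inter_eq_empty.1
        (subset_compl_iff_disjoint_right.1 (subset_of_mem_clustersAt h))]
      exact empty_mem_restrict hA
  ext U
  simp only [mem_image]
  constructor
  · rintro ⟨u, hu, rfl⟩
    rcases mem_graftSides.1 hu with hu | hu
    · exact hGC u hu
    · convert sdiff_mem_restrict (hGC _ hu) using 1
      ext; simp; tauto
  · intro hU
    by_cases hU0 : U = ∅
    · exact ⟨Aᶜ, compl_self_mem_graftSides, by
        rw [hU0, inter_comm, inter_compl]⟩
    by_cases hUA : U = A
    · exact ⟨A, self_mem_graftSides, by rw [hUA, inter_self]⟩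
    have hUA' := subset_of_mem_restrict hU
    rcases mem_or_sdiff_mem_clustersAt hY (mem_properRestrict.2 ⟨hU, hU0, hUA⟩) with h | h
    · exact ⟨U, mem_graftSides_of_mem_clustersAt h, inter_eq_left.2 hUA'⟩
    · refine ⟨(A \ U)ᶜ, compl_mem_graftSides (mem_graftSides_of_mem_clustersAt h), ?_⟩
      ext x
      simp only [mem_inter, mem_compl, mem_sdiff, not_and, not_not]
      exact ⟨fun h => h.1 h.2, fun h => ⟨fun _ => h, hUA' h⟩⟩

/-- `T` together with the results of the TBR operations on `T` deleting the edge inducing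
`A | Aᶜ`. -/
def reconnections (T : PhyloTree n) (A : Finset (Fin n)) : Set (PhyloTree n) :=
  {T' | A ∈ T'.sides ∧ T'.restrict A = T.restrict A ∧ T'.restrict Aᶜ = T.restrict Aᶜ}

theorem self_mem_reconnections (hA : A ∈ T.sides) : T ∈ T.reconnections A :=
  ⟨hA, rfl, rfl⟩

theorem reconnections_compl : T.reconnections Aᶜ = T.reconnections A := by
  ext T'
  simp only [reconnections, Set.mem_ofPred_eq, compl_mem_sides_iff, compl_compl]
  tauto

theorem mem_reconnections_of_sides_eq (hA : A ∈ T.sides) (hY : Y ∈ T.properRestrict A)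
    (hZ : Z ∈ T.properRestrict Aᶜ) (hT' : T'.sides = T.graftSides A Y Z) :
    T' ∈ T.reconnections A := by
  refine ⟨hT' ▸ self_mem_graftSides, ?_, ?_⟩
  · rw [restrict, hT', restrict_graftSides hA hY]
  · rw [restrict, hT', ← graftSides_compl, restrict_graftSides (T.compl_mem A hA) hZ]

/-- `Y` is a child cluster of `A` in `T'`. -/
theorem exists_clustersAt_subset_sides (hA' : A ∈ T'.sides) (h2 : 2 ≤ #A)
    (hr : T'.restrict A = T.restrict A) :
    ∃ Y ∈ T.properRestrict A, T.clustersAt A Y ⊆ T'.sides := by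
  obtain ⟨Y, Y₂, hc⟩ := exists_isChildPair hA' h2
  have hpr : T'.properRestrict A = T.properRestrict A := by
    rw [properRestrict, properRestrict, hr]
  refine ⟨Y, hpr ▸ mem_properRestrict.2 ⟨mem_restrict_of_subset hc.left_mem hc.left_subset,
    ne_empty_of_mem_sides hc.left_mem, hc.left_ssubset.ne⟩, fun u hu => ?_⟩
  obtain ⟨hu, hpos⟩ := mem_clustersAt.1 hu
  rw [← hpr, properRestrict_eq hA'] at hu
  simp only [mem_union, mem_filter, mem_image] at hu
  rcases hu with ⟨hu, -⟩ | ⟨W, ⟨hW, hWA⟩, rfl⟩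
  · exact hu
  rcases eq_or_eq_sdiff_of_subset_or hc.left_subset hc.left_nonempty
      (hc.sdiff_left ▸ hc.right_nonempty) hWA.1
      (hc.sdiff_left ▸ hc.subset_or_subset W hW hWA) hpos with rfl | rfl
  · rw [hc.sdiff_left]
    exact hc.right_mem
  · rw [Finset.sdiff_sdiff_eq_self hc.left_subset]
    exact hc.left_mem

theorem graftSides_subset_sides (hA' : A ∈ T'.sides) (hY : T.clustersAt A Y ⊆ T'.sides)
    (hZ : T.clustersAt Aᶜ Z ⊆ T'.sides) : T.graftSides A Y Z ⊆ T'.sides := by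
  have hGC : T.graftClusters A Y Z ⊆ T'.sides := by
    intro u hu
    rcases mem_graftClusters.1 hu with (rfl | h) | (rfl | h)
    · exact hA'
    · exact hY h
    · exact T'.compl_mem _ hA'
    · exact hZ h
  intro u hu
  rcases mem_graftSides.1 hu with hu | hu
  · exact hGC hu
  · exact compl_mem_sides_iff.1 (hGC hu)

theorem exists_sides_eq_graftSides_of_mem_reconnections (hA : A ∈ T.sides) (h2 : 2 ≤ #A)
    (h2c : 2 ≤ #Aᶜ) (hT' : T' ∈ T.reconnections A) :
    ∃ Y ∈ T.properRestrict A, ∃ Z ∈ T.properRestrict Aᶜ,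
      T'.sides = T.graftSides A Y Z := by
  obtain ⟨hA', hr, hrc⟩ := hT'
  obtain ⟨Y, hY, hYs⟩ := exists_clustersAt_subset_sides hA' h2 hr
  obtain ⟨Z, hZ, hZs⟩ := exists_clustersAt_subset_sides (T'.compl_mem A hA') h2c hrc
  obtain ⟨G, hG⟩ := exists_sides_eq_graftSides hA hY hZ
  refine ⟨Y, hY, Z, hZ, ?_⟩
  rw [← hG, eq_of_sides_subset (hG ▸ graftSides_subset_sides hA' hYs hZs : G.sides ⊆ _)]

theorem mem_clustersAt_of_mem_graftSides (hA : A ∈ T.sides) (hu : u ∈ T.graftSides A Y Z)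
    (huA : u ⊂ A) : u ∈ T.clustersAt A Y := by
  have hAc := (T.proper _ (T.compl_mem A hA)).1
  have hdis : ∀ {w}, w ⊆ A → w ⊆ Aᶜ → w = ∅ := fun h h' =>
    disjoint_self.1 (disjoint_of_subset_left h (subset_compl_iff_disjoint_right.1 h').symm)
  rcases mem_graftSides.1 hu with hu' | hu'
  · rcases mem_graftClusters.1 hu' with (rfl | h) | (rfl | h)
    · exact absurd huA (lt_irrefl _)
    · exact h
    · exact absurd (hdis huA.1 subset_rfl) hAc.ne_empty
    · exact absurd (hdis huA.1 (subset_of_mem_clustersAt h))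
        (proper_of_mem_graftClusters hA hu').1.ne_empty
  · rcases subset_or_subset_compl_of_mem_graftClusters hu' with h | h
    · exact absurd (hdis (compl_le_iff_compl_le.1 h |>.trans huA.1) subset_rfl) hAc.ne_empty
    · exact absurd (compl_subset_compl.1 h) huA.not_subset

theorem eq_or_eq_sdiff_of_graftSides_eq (hA : A ∈ T.sides) (hY : Y ∈ T.properRestrict A)
    (hY' : Y' ∈ T.properRestrict A) (h : T.graftSides A Y' Z' = T.graftSides A Y Z) :
    Y' = Y ∨ Y' = A \ Y := by
  have key : ∀ {W}, W ∈ T.clustersAt A Y' → W ∈ T.clustersAt A Y := fun hW =>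
    mem_clustersAt_of_mem_graftSides hA (h ▸ mem_graftSides_of_mem_clustersAt hW)
      (ssubset_of_mem_clustersAt hW)
  exact eq_or_eq_sdiff_of_subset_or (subset_of_mem_properRestrict hY)
    (nonempty_of_mem_properRestrict hY) (sdiff_nonempty_of_mem_properRestrict hY)
    (subset_of_mem_properRestrict hY') (mem_clustersAt.1 (key (self_mem_clustersAt hY'))).2
    (mem_clustersAt.1 (key (sdiff_mem_clustersAt hY'))).2

def graftSystems (T : PhyloTree n) (A : Finset (Fin n)) : Finset (Finset (Finset (Fin n))) :=
  (T.properRestrict A ×ˢ T.properRestrict Aᶜ).image fun p => T.graftSides A p.1 p.2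

theorem filter_graftSides_eq (hA : A ∈ T.sides) (hY : Y ∈ T.properRestrict A)
    (hZ : Z ∈ T.properRestrict Aᶜ) :
    (T.properRestrict A ×ˢ T.properRestrict Aᶜ).filter
        (fun p => T.graftSides A p.1 p.2 = T.graftSides A Y Z) =
      ({Y, A \ Y} : Finset (Finset (Fin n))) ×ˢ ({Z, Aᶜ \ Z} : Finset (Finset (Fin n))) := by
  have hYA := subset_of_mem_properRestrict hY
  have hZA := subset_of_mem_properRestrict hZ
  ext ⟨Y', Z'⟩
  simp only [mem_filter, mem_product, mem_insert, mem_singleton]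
  constructor
  · rintro ⟨⟨hY', hZ'⟩, h⟩
    refine ⟨eq_or_eq_sdiff_of_graftSides_eq hA hY hY' h, ?_⟩
    rw [← graftSides_compl, ← graftSides_compl (Y := Y)] at h
    exact eq_or_eq_sdiff_of_graftSides_eq (T.compl_mem A hA) hZ hZ' h
  · rintro ⟨hY', hZ'⟩
    refine ⟨⟨?_, ?_⟩, ?_⟩
    · rcases hY' with rfl | rfl
      exacts [hY, sdiff_mem_properRestrict hY]
    · rcases hZ' with rfl | rfl
      exacts [hZ, sdiff_mem_properRestrict hZ]
    · rcases hY' with rfl | rfl <;> rcases hZ' with rfl | rfl <;>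
        simp only [graftSides_sdiff_left hYA, graftSides_sdiff_right hZA]

/-- Every fibre has four elements, so the `(4 #A - 6) (4 #Aᶜ - 6)` pairs of sides of `T|A`
and `T|Aᶜ` give a quarter as many split systems. -/
theorem card_graftSystems (hA : A ∈ T.sides) (h2 : 2 ≤ #A) (h2c : 2 ≤ #Aᶜ) :
    #(T.graftSystems A) = (2 * #A - 3) * (2 * #Aᶜ - 3) := by
  set P := T.properRestrict A ×ˢ T.properRestrict Aᶜ
  have hfib : ∀ G ∈ T.graftSystems A,
      #(P.filter fun p => T.graftSides A p.1 p.2 = G) = 4 := by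
    intro G hG
    obtain ⟨⟨Y, Z⟩, hp, rfl⟩ := mem_image.1 hG
    obtain ⟨hY, hZ⟩ := mem_product.1 hp
    have hne : ∀ {B U : Finset (Fin n)}, U ∈ T.properRestrict B → U ≠ B \ U := by
      intro B U hU h
      have := disjoint_sdiff (s := U) (t := B)
      rw [← h] at this
      exact (nonempty_of_mem_properRestrict hU).ne_empty (disjoint_self.1 this)
    rw [filter_graftSides_eq hA hY hZ, card_product, card_pair (hne hY), card_pair (hne hZ)]
  have hP : #P = 4 * #(T.graftSystems A) :=
    (card_le_mul_card_image P 4 fun G hG => (hfib G hG).le).antisymm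
      (mul_card_image_le_card P 4 fun G hG => (hfib G hG).ge)
  rw [card_product, card_properRestrict hA h2, card_properRestrict (T.compl_mem A hA) h2c]
    at hP
  have : 4 * #A - 6 = 2 * (2 * #A - 3) := by omega
  have : 4 * #Aᶜ - 6 = 2 * (2 * #Aᶜ - 3) := by omega
  nlinarith

theorem sides_image_reconnections (hA : A ∈ T.sides) (h2 : 2 ≤ #A) (h2c : 2 ≤ #Aᶜ) :
    sides '' T.reconnections A = T.graftSystems A := by
  ext G
  simp only [graftSystems, coe_image, Set.mem_image, mem_coe, mem_product, Prod.exists]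
  constructor
  · rintro ⟨T', hT', rfl⟩
    obtain ⟨Y, hY, Z, hZ, h⟩ := exists_sides_eq_graftSides_of_mem_reconnections hA h2 h2c hT'
    exact ⟨Y, Z, ⟨hY, hZ⟩, h.symm⟩
  · rintro ⟨Y, Z, ⟨hY, hZ⟩, rfl⟩
    obtain ⟨T', hT'⟩ := exists_sides_eq_graftSides hA hY hZ
    exact ⟨T', mem_reconnections_of_sides_eq hA hY hZ hT', hT'⟩

theorem ncard_reconnections (hA : A ∈ T.sides) (h2 : 2 ≤ #A) (h2c : 2 ≤ #Aᶜ) :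
    (T.reconnections A).ncard = (2 * #A - 3) * (2 * #Aᶜ - 3) := by
  rw [← Set.ncard_image_of_injective _ sides_injective, sides_image_reconnections hA h2 h2c,
    Set.ncard_coe_finset, card_graftSystems hA h2 h2c]

theorem mem_sides_of_mem_OTBR {θ : Move n} (hθ : θ ∈ T.OTBR) (h : θ.1 = s(B, Bᶜ)) :
    B ∈ T.sides := by
  obtain ⟨-, A, hA, hAT, -⟩ := hθ
  rcases Sym2.mk_compl_eq_mk_compl_iff.1 (h.symm.trans hA) with rfl | rfl
  exacts [hAT, T.compl_mem A hAT]

theorem OTBR_filter_eq (hA : A ∈ T.sides) :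
    {θ ∈ T.OTBR | θ.1 = s(A, Aᶜ)} = Prod.mk s(A, Aᶜ) '' (T.reconnections A \ {T}) := by
  ext ⟨e, T'⟩
  simp only [OTBR, Set.mem_ofPred_eq, Set.mem_image, Set.mem_sdiff, Set.mem_singleton_iff,
    Prod.mk.injEq]
  constructor
  · rintro ⟨⟨hne, A', he, -, hT'⟩, rfl⟩
    refine ⟨T', ⟨?_, hne⟩, rfl, rfl⟩
    obtain ⟨hA', hr, hrc⟩ := hT'
    have : T' ∈ T.reconnections A' := ⟨hA', hr.symm, hrc.symm⟩
    rcases Sym2.mk_compl_eq_mk_compl_iff.1 he.symm with rfl | rfl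
    · exact this
    · rwa [reconnections_compl] at this
  · rintro ⟨T', ⟨⟨hA', hr, hrc⟩, hne⟩, rfl, rfl⟩
    exact ⟨⟨hne, A, rfl, hA, hA', hr.symm, hrc.symm⟩, rfl⟩

theorem ncard_OTBR_filter (hA : A ∈ T.sides) (h2 : 2 ≤ #A) (h2c : 2 ≤ #Aᶜ) :
    {θ ∈ T.OTBR | θ.1 = s(A, Aᶜ)}.ncard = (2 * #A - 3) * (2 * #Aᶜ - 3) - 1 := by
  rw [OTBR_filter_eq hA, Set.ncard_image_of_injective _ (Prod.mk_right_injective _),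
    Set.ncard_sdiff_singleton_of_mem (self_mem_reconnections hA), ncard_reconnections hA h2 h2c]

/-- Double counting: each TBR operation inducing a non-trivial split is counted once for
each of the two sides of that split. -/
theorem sum_ncard_OTBR_filter (T : PhyloTree n) :
    ∑ B ∈ T.sides.filter (fun B => 2 ≤ #B ∧ 2 ≤ #Bᶜ),
        {θ ∈ T.OTBR | θ.1 = s(B, Bᶜ)}.ncard =
      2 * {θ ∈ T.OTBR | ∃ B : Finset (Fin n),
        θ.1 = s(B, Bᶜ) ∧ 2 ≤ #B ∧ 2 ≤ #Bᶜ}.ncard := by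
  classical
  set Q := T.sides.filter (fun B => 2 ≤ #B ∧ 2 ≤ #Bᶜ)
  set O := {θ ∈ T.OTBR | ∃ B : Finset (Fin n), θ.1 = s(B, Bᶜ) ∧ 2 ≤ #B ∧ 2 ≤ #Bᶜ}
  set t := (Set.toFinite O).toFinset
  let r : Finset (Fin n) → Move n → Prop := fun B θ => θ.1 = s(B, Bᶜ)
  have hQ : ∀ {B}, B ∈ Q ↔ B ∈ T.sides ∧ 2 ≤ #B ∧ 2 ≤ #Bᶜ := mem_filter
  have habove : ∀ B ∈ Q,
      {θ ∈ T.OTBR | θ.1 = s(B, Bᶜ)}.ncard = #(t.bipartiteAbove r B) := by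
    intro B hB
    rw [← Set.ncard_coe_finset]
    congr 1
    ext θ
    simp only [bipartiteAbove, coe_filter, Set.Finite.mem_toFinset, t, O, r,
      Set.mem_ofPred_eq]
    exact ⟨fun h => ⟨⟨h.1, B, h.2, (hQ.1 hB).2⟩, h.2⟩, fun h => ⟨h.1.1, h.2⟩⟩
  have hbelow : ∀ θ ∈ t, #(Q.bipartiteBelow r θ) = 2 := by
    intro θ hθ
    obtain ⟨hθ, B, hB, h2, h2c⟩ := (Set.toFinite O).mem_toFinset.1 hθ
    have hBs := mem_sides_of_mem_OTBR hθ hB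
    have : Q.bipartiteBelow r θ = {B, Bᶜ} := by
      ext C
      simp only [bipartiteBelow, mem_filter, r, hB, mem_insert, mem_singleton,
        Sym2.mk_compl_eq_mk_compl_iff, hQ]
      constructor
      · rintro ⟨-, rfl | rfl⟩
        · exact .inl rfl
        · exact .inr (compl_compl C).symm
      · rintro (rfl | rfl)
        · exact ⟨⟨hBs, h2, h2c⟩, .inl rfl⟩
        · exact ⟨⟨T.compl_mem B hBs, h2c, (compl_compl B).symm ▸ h2⟩,
            .inr (compl_compl B).symm⟩
    rw [this, card_pair]
    intro h
    obtain ⟨x, hx⟩ := card_pos.1 (by omega : 0 < #B)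
    exact (mem_compl.1 (h ▸ hx)) hx
  rw [sum_congr rfl habove, sum_card_bipartiteAbove_eq_sum_card_bipartiteBelow,
    sum_congr rfl hbelow, sum_const, smul_eq_mul, Set.ncard_eq_toFinset_card O, mul_comm]

end PhyloTree

theorem otbr_nontrivial_split_count_general (n : ℕ) (T : PhyloTree n) :
    (∀ A : Finset (Fin n), A ∈ T.sides → 2 ≤ A.card → 2 ≤ Aᶜ.card →
      {θ ∈ T.OTBR | θ.1 = Sym2.mk A Aᶜ}.ncard =
        (2 * A.card - 3) * (2 * Aᶜ.card - 3) - 1) ∧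
    {θ ∈ T.OTBR | ∃ B : Finset (Fin n),
        θ.1 = Sym2.mk B Bᶜ ∧ 2 ≤ B.card ∧ 2 ≤ Bᶜ.card}.ncard =
      (∑ B ∈ T.sides.filter (fun B => 2 ≤ B.card ∧ 2 ≤ Bᶜ.card),
        ((2 * B.card - 3) * (2 * Bᶜ.card - 3) - 1)) / 2 := by
  refine ⟨fun A hA h2 h2c => PhyloTree.ncard_OTBR_filter hA h2 h2c, ?_⟩
  rw [← Finset.sum_congr rfl fun B hB => PhyloTree.ncard_OTBR_filter (Finset.mem_filter.1 hB).1
    (Finset.mem_filter.1 hB).2.1 (Finset.mem_filter.1 hB).2.2, T.sum_ncard_OTBR_filter,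
    Nat.mul_div_cancel_left _ two_pos]

/-- the number of TBR operations on `T ∈ 𝒯_n` (`n ≥ 4`)
inducing a given non-trivial split `A|B` is `(2|A|−3)(2|B|−3) − 1`;
consequently the number of TBR operations inducing non-trivial splits
is the sum of `(2|A|−3)(2|B|−3) − 1` over all non-trivial splits `A|B`
(each such split is recorded twice among the sides, whence the exact
division by two). -/
theorem otbr_nontrivial_split_count (n : ℕ) (hn : 4 ≤ n) (T : PhyloTree n) :
    (∀ A : Finset (Fin n), A ∈ T.sides → 2 ≤ A.card → 2 ≤ Aᶜ.card →
      {θ ∈ T.OTBR | θ.1 = Sym2.mk A Aᶜ}.ncard =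
        (2 * A.card - 3) * (2 * Aᶜ.card - 3) - 1) ∧
    {θ ∈ T.OTBR | ∃ B : Finset (Fin n),
        θ.1 = Sym2.mk B Bᶜ ∧ 2 ≤ B.card ∧ 2 ≤ Bᶜ.card}.ncard =
      (∑ B ∈ T.sides.filter (fun B => 2 ≤ B.card ∧ 2 ≤ Bᶜ.card),
        ((2 * B.card - 3) * (2 * Bᶜ.card - 3) - 1)) / 2 :=
  otbr_nontrivial_split_count_general n T
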